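/- Least action principle: fix a finite set V ⊂ ℤ^d, instruction stacks I, a configuration σ on V, and an odometer m. If an odometer m′ is produced by a sequence of acceptable topplings starting from (σ, m) that ends in a stable configuration, then m′(x) ≥ Odom_V(σ, m)(x) for every x ∈ V, where Odom_V(σ, m) is the stabilizing odometer obtained by toppling only unstable sites. -/

import Mathlib

/-!
Site-wise (Diaconis–Fulton) representation of Activated Random Walk,
following Rolla's survey and the paper
"The critical density of activated random walk is mean field in high dimension".
-/

open MeasureTheory ProbabilityTheory Filter
open scoped ENNReal

namespace ARW

/-- An instruction on a stack: either a sleep instruction, or a jump instruction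
labelled by a jump direction `l : L`. -/
inductive Instr (L : Type) : Type
  | sleep : Instr L
  | jump (l : L) : Instr L
  deriving DecidableEq

instance (L : Type) : MeasurableSpace (Instr L) := ⊤

/-- The state of a single site: `num n` means `n` active particles (and no sleeping
particle), `sleepy` means a single sleeping particle.  This realizes `ℕ ∪ {𝔰}`. -/
inductive SiteState : Type
  | num (n : ℕ) : SiteState
  | sleepy : SiteState
  deriving DecidableEq

instance : Inhabited SiteState := ⟨.num 0⟩
instance : MeasurableSpace SiteState := ⊤

/-- Total number of particles at a site (`|𝔰| = 1`). -/
def SiteState.count : SiteState → ℕ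
  | .num n => n
  | .sleepy => 1

/-- Number of *active* particles at a site. -/
def SiteState.numActive : SiteState → ℕ
  | .num n => n
  | .sleepy => 0

/-- Add one active particle to a site, waking a sleeping particle if present. -/
def SiteState.addActive : SiteState → SiteState
  | .num n => .num (n + 1)
  | .sleepy => .num 2

variable {X L : Type}

/-- Instruction stacks: an instruction for every site and stack position. -/
abbrev Stacks (X L : Type) := X → ℕ → Instr L

/-- A particle configuration `X → ℕ ∪ {𝔰}`. -/
abbrev Config (X : Type) := X → SiteState

/-- A state of the system: a configuration together with an odometer. -/
abbrev ARWState (X : Type) := Config X × (X → ℕ)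

/-- The all-active configuration associated to `σ : X → ℕ`. -/
def activeConfig (σ : X → ℕ) : Config X := fun x => .num (σ x)

/-- Topple site `x` (in `V`, with particles jumping out of `V` killed):
apply the next unused instruction of the stack at `x` and increment the odometer there.
A sleep instruction puts a lone (possibly just woken) particle to sleep and has no
effect when two or more particles are present; a jump instruction moves one particle
(waking it first if it was sleeping) to the target site, waking any sleeping particle
there. -/
def toppleAt [DecidableEq X] (tgt : X → L → X) (V : Finset X) (I : Stacks X L)
    (x : X) (s : ARWState X) : ARWState X :=
  let σ := s.1
  let σ₁ : Config X :=
    match I x (s.2 x) with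
    | .sleep => if σ x = .num 1 then Function.update σ x .sleepy else σ
    | .jump l =>
        let y := tgt x l
        let σ' := Function.update σ x (.num ((σ x).count - 1))
        if y ∈ V then Function.update σ' y ((σ' y).addActive) else σ'
  (σ₁, Function.update s.2 x (s.2 x + 1))

/-- Eligibility predicate for ordinary toppling: the site is unstable,
i.e. holds at least one active particle. -/
def unstableElig : X → SiteState → Prop := fun _ st => 1 ≤ st.numActive

/-- Eligibility predicate for weak toppling with respect to `U`: sites of `U` are
weakly unstable when they hold at least two active particles; other sites are
weakly unstable iff unstable. -/
def weakElig [DecidableEq X] (U : Finset X) : X → SiteState → Prop :=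
  fun x st => if x ∈ U then 2 ≤ st.numActive else 1 ≤ st.numActive

/-- Eligibility predicate for acceptable toppling: the site is nonempty. -/
def accElig : X → SiteState → Prop := fun _ st => 1 ≤ st.count

/-- One toppling step at some site of `V` that is eligible according to `elig`. -/
def ToppleStep [DecidableEq X] (tgt : X → L → X) (V : Finset X) (I : Stacks X L)
    (elig : X → SiteState → Prop) (s t : ARWState X) : Prop :=
  ∃ x ∈ V, elig x (s.1 x) ∧ t = toppleAt tgt V I x s

/-- Reachability by finitely many topplings of `elig`-eligible sites of `V`. -/
abbrev Reach [DecidableEq X] (tgt : X → L → X) (V : Finset X) (I : Stacks X L)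
    (elig : X → SiteState → Prop) : ARWState X → ARWState X → Prop :=
  Relation.ReflTransGen (ToppleStep tgt V I elig)

/-- A configuration is stable in `V` if no site of `V` holds an active particle. -/
def IsStable (V : Finset X) (σ : Config X) : Prop := ∀ x ∈ V, (σ x).numActive = 0

/-- A configuration is weakly stable in `V` w.r.t. `U` if no site of `V` is weakly
unstable (sites of `U` may hold a single active particle). -/
def IsWeaklyStable [DecidableEq X] (V U : Finset X) (σ : Config X) : Prop :=
  ∀ x ∈ V, ¬ weakElig U x (σ x)

/-- The stabilization of the state `s` in `V`: the state reached from `s` by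
toppling unstable sites of `V` until none remain.  (By the abelian property this
state is unique whenever it exists; `Classical.epsilon` selects it.)
Its first component is `Stab_V`, its second component is the odometer `Odom_V`. -/
noncomputable def stabState [DecidableEq X] (tgt : X → L → X) (V : Finset X)
    (I : Stacks X L) (s : ARWState X) : ARWState X :=
  Classical.epsilon fun t => Reach tgt V I unstableElig s t ∧ IsStable V t.1

/-- The weak stabilization of the state `s` in `V` with respect to `U`. -/
noncomputable def weakStabState [DecidableEq X] (tgt : X → L → X) (V U : Finset X)
    (I : Stacks X L) (s : ARWState X) : ARWState X :=
  Classical.epsilon fun t => Reach tgt V I (weakElig U) s t ∧ IsWeaklyStable V U t.1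

/-- The instruction stacks `I` admit weak stabilization on `V` w.r.t. `U` from every
state (this holds almost surely). -/
def WeakStabilizable [DecidableEq X] (tgt : X → L → X) (V U : Finset X)
    (I : Stacks X L) : Prop :=
  ∀ s : ARWState X, ∃ t, Reach tgt V I (weakElig U) s t ∧ IsWeaklyStable V U t.1

/-- The jump-out step at the origin `o`: acceptably topple the particle at `o`
(using the sleep instructions encountered, which put it to sleep and wake it again)
until it jumps out of `o`. -/
noncomputable def jumpOut [DecidableEq X] (tgt : X → L → X) (o : X) (V : Finset X)
    (I : Stacks X L) (s : ARWState X) : ARWState X :=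
  let ℓ := sInf {k | s.2 o ≤ k ∧ I o k ≠ Instr.sleep}
  toppleAt tgt V I o (s.1, Function.update s.2 o ℓ)

/-- The strong stabilization procedure started from `s0`: first weakly stabilize
w.r.t. `o` (the pre-step, index `0`), then repeatedly jump the particle out of the
origin and weakly stabilize again, stopping when the origin is empty. -/
noncomputable def strongSeq [DecidableEq X] (tgt : X → L → X) (o : X) (V : Finset X)
    (I : Stacks X L) (s0 : ARWState X) : ℕ → ARWState X
  | 0 => weakStabState tgt V {o} I s0
  | k + 1 =>
      if ((strongSeq tgt o V I s0 k).1 o).count = 0 then strongSeq tgt o V I s0 k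
      else weakStabState tgt V {o} I (jumpOut tgt o V I (strongSeq tgt o V I s0 k))

/-- `Ch`: the number of completed jump-out iterations in the strong stabilization
of the configuration `σ0` on `V` with respect to the origin `o`. -/
noncomputable def Ch [DecidableEq X] (tgt : X → L → X) (o : X) (V : Finset X)
    (I : Stacks X L) (σ0 : Config X) : ℕ :=
  sInf {k | ((strongSeq tgt o V I (σ0, fun _ => 0) k).1 o).count = 0}

/-- `ACh = max (Ch - 1) 0`: the number of additional chances. -/
noncomputable def ACh [DecidableEq X] (tgt : X → L → X) (o : X) (V : Finset X)
    (I : Stacks X L) (σ0 : Config X) : ℕ :=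
  Ch tgt o V I σ0 - 1

/-- The strong stabilizing odometer: the odometer at the end of the strong
stabilization procedure. -/
noncomputable def strongOdom [DecidableEq X] (tgt : X → L → X) (o : X) (V : Finset X)
    (I : Stacks X L) (σ0 : Config X) : X → ℕ :=
  (strongSeq tgt o V I (σ0, fun _ => 0) (Ch tgt o V I σ0)).2

/-- The odometer of the initial weak stabilization (pre-step). -/
noncomputable def weakOdom0 [DecidableEq X] (tgt : X → L → X) (o : X) (V : Finset X)
    (I : Stacks X L) (σ0 : Config X) : X → ℕ :=
  (strongSeq tgt o V I (σ0, fun _ => 0) 0).2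

/-- The number of closed walks of length `n` from `o` to `o` in the graph whose steps
are given by `tgt`. -/
noncomputable def closedWalkCount (tgt : X → L → X) (o : X) (n : ℕ) : ℕ :=
  Nat.card {f : Fin n → L // (List.ofFn f).foldl tgt o = o}

/-- The expected number of returns to `o` of the simple random walk (uniform steps
in `L`): `E[R] = ∑_{n ≥ 1} P(S_n = o)`, valued in `ℝ≥0∞`. -/
noncomputable def expReturns [Fintype L] (tgt : X → L → X) (o : X) : ℝ≥0∞ :=
  ∑' n : ℕ, (closedWalkCount tgt o (n + 1) : ℝ≥0∞) / (Fintype.card L : ℝ≥0∞) ^ (n + 1)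

/-- `I` is a family of i.i.d. ARW instruction stacks with sleep rate `lam` on the
probability space `(Ω, P)`: the entries are jointly independent, each entry is a
sleep instruction with probability `p_𝔰 = lam/(1+lam)` and any given jump instruction
with probability `p_j/deg` where `p_j = 1 - p_𝔰` and `deg = |L|`. -/
structure IsARWStacks [Fintype L] (lam : ℝ) {Ω : Type} [MeasurableSpace Ω]
    (P : Measure Ω) (I : Ω → Stacks X L) : Prop where
  meas : ∀ x k, Measurable fun ω => I ω x k
  indep : iIndepFun (β := fun _ : X × ℕ => Instr L)
    (fun p ω => I ω p.1 p.2) P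
  sleep_prob : ∀ x k, P {ω | I ω x k = Instr.sleep} = ENNReal.ofReal (lam / (1 + lam))
  jump_prob : ∀ x k l, P {ω | I ω x k = Instr.jump l}
      = ENNReal.ofReal ((1 - lam / (1 + lam)) / (Fintype.card L : ℝ))

/-- The full odometer `m_σ(x)` of the system on the whole (infinite) graph: the
supremum over finite `V` of the stabilizing odometers (these are nondecreasing
in `V`). -/
noncomputable def mOdomGen [DecidableEq X] (tgt : X → L → X) (I : Stacks X L)
    (σ0 : Config X) (x : X) : ℕ∞ :=
  ⨆ V : Finset X, ((stabState tgt V I (σ0, fun _ => 0)).2 x : ℕ∞)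

/-! ### The lattice `ℤ^d` -/

/-- Sites of `ℤ^d`. -/
abbrev SiteZ (d : ℕ) := Fin d → ℤ

/-- Jump directions in `ℤ^d`: a coordinate and a sign (`2d` of them). -/
abbrev Dir (d : ℕ) := Fin d × Bool

/-- The unit step in direction `p`. -/
def stepDir (d : ℕ) (p : Dir d) : SiteZ d :=
  Pi.single p.1 (if p.2 then (1 : ℤ) else -1)

/-- Nearest-neighbour jumps on `ℤ^d`. -/
def tgtZ (d : ℕ) : SiteZ d → Dir d → SiteZ d := fun x p => x + stepDir d p

/-- The origin of `ℤ^d`. -/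
def originZ (d : ℕ) : SiteZ d := 0

/-- The box `V_n = {-n, …, n}^d`. -/
noncomputable def BoxZ (d : ℕ) (n : ℕ) : Finset (SiteZ d) :=
  Finset.Icc (fun _ => -(n : ℤ)) (fun _ => (n : ℤ))

/-- The ball `B₁`: the origin together with its `2d` neighbours. -/
def ballOneZ (d : ℕ) : Finset (SiteZ d) :=
  insert (originZ d) (Finset.univ.image (stepDir d))

/-- `Stab_V σ` on `ℤ^d` (started from the zero odometer). -/
noncomputable def StabZ (d : ℕ) (V : Finset (SiteZ d)) (I : Stacks (SiteZ d) (Dir d))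
    (σ0 : Config (SiteZ d)) : Config (SiteZ d) :=
  (stabState (tgtZ d) V I (σ0, fun _ => 0)).1

/-- `Ch(σ, V)` on `ℤ^d`, w.r.t. the origin. -/
noncomputable def ChZ (d : ℕ) (V : Finset (SiteZ d)) (I : Stacks (SiteZ d) (Dir d))
    (σ0 : Config (SiteZ d)) : ℕ :=
  Ch (tgtZ d) (originZ d) V I σ0

/-- `ACh(σ, V) = max(Ch - 1, 0)` on `ℤ^d`. -/
noncomputable def AChZ (d : ℕ) (V : Finset (SiteZ d)) (I : Stacks (SiteZ d) (Dir d))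
    (σ0 : Config (SiteZ d)) : ℕ :=
  ACh (tgtZ d) (originZ d) V I σ0

/-- Strong stabilizing odometer on `ℤ^d`. -/
noncomputable def strongOdomZ (d : ℕ) (V : Finset (SiteZ d))
    (I : Stacks (SiteZ d) (Dir d)) (σ0 : Config (SiteZ d)) : SiteZ d → ℕ :=
  strongOdom (tgtZ d) (originZ d) V I σ0

/-- Odometer of the initial weak stabilization on `ℤ^d`. -/
noncomputable def weakOdom0Z (d : ℕ) (V : Finset (SiteZ d))
    (I : Stacks (SiteZ d) (Dir d)) (σ0 : Config (SiteZ d)) : SiteZ d → ℕ :=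
  weakOdom0 (tgtZ d) (originZ d) V I σ0

/-- `J₀(m)`: the number of pairs `(x, ℓ)` with `x ∼ 0`, `ℓ < m x`, such that the
instruction `I x ℓ` is a jump to the origin. -/
noncomputable def J0Z (d : ℕ) (I : Stacks (SiteZ d) (Dir d)) (m : SiteZ d → ℕ) : ℕ :=
  ∑ p : Dir d,
    ((Finset.range (m (stepDir d p))).filter
      fun ℓ => I (stepDir d p) ℓ = Instr.jump (p.1, !p.2)).card

/-- The full odometer `m_σ` on `ℤ^d`, as the nondecreasing limit of the stabilizing
odometers over the boxes `V_n`. -/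
noncomputable def mOdomZ (d : ℕ) (I : Stacks (SiteZ d) (Dir d)) (σ0 : Config (SiteZ d))
    (x : SiteZ d) : ℕ∞ :=
  ⨆ n : ℕ, ((stabState (tgtZ d) (BoxZ d n) I (σ0, fun _ => 0)).2 x : ℕ∞)

/-- The limiting stable configuration `Stab σ = lim_{V ↗ ℤ^d} Stab_V σ` (the eventual
value of `Stab_{V_n} σ` at `x` along the boxes; it exists a.s. on the fixation event). -/
noncomputable def stabLimitZ (d : ℕ) (I : Stacks (SiteZ d) (Dir d))
    (σ0 : Config (SiteZ d)) (x : SiteZ d) : SiteState :=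
  Classical.epsilon fun st =>
    ∀ᶠ n in atTop, (stabState (tgtZ d) (BoxZ d n) I (σ0, fun _ => 0)).1 x = st

/-- Translation of configurations of `ℤ^d` by `v`. -/
def shiftZ (d : ℕ) {α : Type} (v : SiteZ d) (σ : SiteZ d → α) : SiteZ d → α :=
  fun x => σ (x + v)

/-- A measure on configurations of `ℤ^d` is translation-ergodic if it is invariant
under all translations and every translation-invariant measurable set is trivial. -/
structure IsTransErgodicZ (d : ℕ) {α : Type} [MeasurableSpace α]
    (μ : Measure (SiteZ d → α)) : Prop where
  invariant : ∀ v : SiteZ d, μ.map (shiftZ d v) = μ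
  ergodic : ∀ A : Set (SiteZ d → α), MeasurableSet A →
    (∀ v : SiteZ d, shiftZ d v ⁻¹' A = A) → μ A = 0 ∨ μ A = 1

/-- `ASFixates d lam ρ`: every ARW system on `ℤ^d` with sleep rate `lam` started from
a translation-ergodic active configuration with mean `ρ`, independent of the
instruction stacks, almost surely fixates (in the sense that every site has a finite
odometer, which by Rolla–Tournier is equivalent to particle fixation). -/
def ASFixates (d : ℕ) (lam ρ : ℝ) : Prop :=
  ∀ (Ω : Type) (_ : MeasurableSpace Ω) (P : Measure Ω), IsProbabilityMeasure P →
    ∀ (I : Ω → Stacks (SiteZ d) (Dir d)) (η : Ω → SiteZ d → ℕ),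
      IsARWStacks lam P I → Measurable η → IndepFun η I P →
      IsTransErgodicZ d (P.map η) →
      (∫⁻ ω, (η ω (originZ d) : ℝ≥0∞) ∂P) = ENNReal.ofReal ρ →
      P {ω | ∀ x, mOdomZ d (I ω) (activeConfig (η ω)) x < ⊤} = 1

/-- The critical density `ρ_c(ℤ^d, λ)` of activated random walk on `ℤ^d`. -/
noncomputable def criticalDensity (d : ℕ) (lam : ℝ) : ℝ :=
  sSup {ρ : ℝ | 0 ≤ ρ ∧ ASFixates d lam ρ}

/-- `E[R(ℤ^d)]`: expected returns to the origin of simple random walk on `ℤ^d`. -/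
noncomputable def expReturnsZ (d : ℕ) : ℝ≥0∞ :=
  expReturns (tgtZ d) (originZ d)

end ARW

/-!
A site that is unstable at `s` keeps an active particle until it is toppled, so every acceptable
sequence ending in a stable configuration topples it. Topplings at distinct nonempty sites
commute: each toppling is a composition of site-local maps (`fallAsleep`, `removeOne`,
`addActive`), and these commute pairwise on nonempty sites. Hence that toppling can be moved to
the front of the acceptable sequence, and induction along the sequence of unstable topplings shows
that the acceptable sequence topples every site at least as often.
-/

namespace ARW

variable {X L : Type} [DecidableEq X]

namespace SiteState

def removeOne (st : SiteState) : SiteState := .num (st.count - 1)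

def fallAsleep (st : SiteState) : SiteState := if st = .num 1 then .sleepy else st

lemma count_addActive (st : SiteState) : st.addActive.count = st.count + 1 := by
  cases st <;> rfl

lemma numActive_le_addActive (st : SiteState) : st.numActive ≤ st.addActive.numActive := by
  cases st <;> simp [numActive, addActive]

lemma numActive_le_count (st : SiteState) : st.numActive ≤ st.count := by
  cases st <;> simp [numActive, count]

lemma addActive_removeOne {st : SiteState} (h : 1 ≤ st.count) :
    st.removeOne.addActive = st.addActive.removeOne := by
  simp only [removeOne, count_addActive]
  cases st <;> simp_all [addActive, count]

lemma addActive_fallAsleep (st : SiteState) : st.fallAsleep.addActive = st.addActive := by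
  unfold fallAsleep
  split_ifs with h <;> simp [h, addActive]

lemma fallAsleep_addActive {st : SiteState} (h : 1 ≤ st.count) :
    st.addActive.fallAsleep = st.addActive := by
  cases st <;> simp_all [fallAsleep, addActive, count]
  omega

end SiteState

def modifyAt (x : X) (f : SiteState → SiteState) (σ : Config X) : Config X :=
  Function.update σ x (f (σ x))

lemma modifyAt_apply (x : X) (f : SiteState → SiteState) (σ : Config X) (z : X) :
    modifyAt x f σ z = if z = x then f (σ x) else σ z := by
  simp [modifyAt, Function.update_apply]

lemma modifyAt_apply_of_ne {x z : X} (f : SiteState → SiteState) (σ : Config X) (h : z ≠ x) :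
    modifyAt x f σ z = σ z := by
  simp [modifyAt_apply, h]

lemma modifyAt_comm {x y : X} {f g : SiteState → SiteState} {σ : Config X}
    (h : x = y → g (f (σ x)) = f (g (σ x))) :
    modifyAt y g (modifyAt x f σ) = modifyAt x f (modifyAt y g σ) := by
  by_cases hxy : x = y
  · subst hxy
    simp [modifyAt, h rfl]
  · simp only [modifyAt, Function.update_of_ne hxy, Function.update_of_ne (Ne.symm hxy)]
    exact Function.update_comm hxy _ _ _

def receive (V : Finset X) (y : X) (st : SiteState) : SiteState :=
  if y ∈ V then st.addActive else st

def applyInstr (tgt : X → L → X) (V : Finset X) (x : X) : Instr L → Config X → Config X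
  | .sleep => modifyAt x SiteState.fallAsleep
  | .jump l => fun σ => modifyAt (tgt x l) (receive V (tgt x l)) (modifyAt x SiteState.removeOne σ)

lemma toppleAt_fst (tgt : X → L → X) (V : Finset X) (I : Stacks X L) (x : X) (s : ARWState X) :
    (toppleAt tgt V I x s).1 = applyInstr tgt V x (I x (s.2 x)) s.1 := by
  simp only [toppleAt]
  cases I x (s.2 x) with
  | sleep =>
    by_cases h : s.1 x = .num 1 <;>
      simp [applyInstr, modifyAt, SiteState.fallAsleep, h]
  | jump l =>
    by_cases h : tgt x l ∈ V <;>
      simp [applyInstr, modifyAt, receive, SiteState.removeOne, h]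

lemma toppleAt_snd (tgt : X → L → X) (V : Finset X) (I : Stacks X L) (x : X) (s : ARWState X) :
    (toppleAt tgt V I x s).2 = Function.update s.2 x (s.2 x + 1) :=
  rfl

lemma receive_comm (V : Finset X) (a b : X) (st : SiteState) :
    receive V a (receive V b st) = receive V b (receive V a st) := by
  unfold receive
  split_ifs <;> rfl

lemma receive_removeOne (V : Finset X) (a : X) {st : SiteState} (h : 1 ≤ st.count) :
    receive V a st.removeOne = (receive V a st).removeOne := by
  unfold receive
  split_ifs
  · exact SiteState.addActive_removeOne h
  · rfl

lemma receive_fallAsleep (V : Finset X) (a : X) {st : SiteState} (h : 1 ≤ st.count) :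
    receive V a st.fallAsleep = (receive V a st).fallAsleep := by
  unfold receive
  split_ifs
  · rw [SiteState.addActive_fallAsleep, SiteState.fallAsleep_addActive h]
  · rfl

variable (tgt : X → L → X) (V : Finset X)

lemma applyInstr_comm_sleep_jump {x y : X} (hxy : x ≠ y) (l : L) {σ : Config X}
    (hx : 1 ≤ (σ x).count) :
    applyInstr tgt V y (.jump l) (applyInstr tgt V x .sleep σ)
      = applyInstr tgt V x .sleep (applyInstr tgt V y (.jump l) σ) := by
  simp only [applyInstr]
  rw [modifyAt_comm (fun h => absurd h hxy), modifyAt_comm]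
  intro
  rw [modifyAt_apply_of_ne _ _ hxy]
  exact receive_fallAsleep V _ hx

lemma applyInstr_comm_jump_jump {x y : X} (hxy : x ≠ y) (lx ly : L) {σ : Config X}
    (hx : 1 ≤ (σ x).count) (hy : 1 ≤ (σ y).count) :
    applyInstr tgt V y (.jump ly) (applyInstr tgt V x (.jump lx) σ)
      = applyInstr tgt V x (.jump lx) (applyInstr tgt V y (.jump ly) σ) := by
  simp only [applyInstr]
  rw [modifyAt_comm (x := tgt x lx) (y := y), modifyAt_comm (x := tgt x lx) (y := tgt y ly)
    (fun _ => receive_comm V _ _ _), modifyAt_comm (x := x) (y := y) (fun h => absurd h hxy),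
    modifyAt_comm (x := x) (y := tgt y ly)]
  · intro h
    rw [← h, modifyAt_apply_of_ne _ _ hxy]
    exact receive_removeOne V _ hx
  · intro h
    rw [h, modifyAt_apply_of_ne _ _ (Ne.symm hxy)]
    exact (receive_removeOne V _ hy).symm

lemma applyInstr_comm {x y : X} (hxy : x ≠ y) (ix iy : Instr L) {σ : Config X}
    (hx : 1 ≤ (σ x).count) (hy : 1 ≤ (σ y).count) :
    applyInstr tgt V y iy (applyInstr tgt V x ix σ)
      = applyInstr tgt V x ix (applyInstr tgt V y iy σ) := by
  cases ix with
  | sleep =>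
    cases iy with
    | sleep => exact modifyAt_comm (fun h => absurd h hxy)
    | jump l => exact applyInstr_comm_sleep_jump tgt V hxy l hx
  | jump lx =>
    cases iy with
    | sleep => exact (applyInstr_comm_sleep_jump tgt V (Ne.symm hxy) lx hy).symm
    | jump ly => exact applyInstr_comm_jump_jump tgt V hxy lx ly hx hy

lemma applyInstr_apply_of_ne {x z : X} (hz : z ≠ x) (i : Instr L) (σ : Config X) :
    applyInstr tgt V x i σ z = σ z ∨ applyInstr tgt V x i σ z = (σ z).addActive := by
  cases i with
  | sleep => exact .inl (modifyAt_apply_of_ne _ _ hz)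
  | jump l =>
    simp only [applyInstr, modifyAt_apply, if_neg hz, receive]
    split_ifs <;> simp_all

variable (I : Stacks X L)

lemma toppleAt_comm {x y : X} (hxy : x ≠ y) {s : ARWState X} (hx : 1 ≤ (s.1 x).count)
    (hy : 1 ≤ (s.1 y).count) :
    toppleAt tgt V I y (toppleAt tgt V I x s) = toppleAt tgt V I x (toppleAt tgt V I y s) := by
  ext1
  · simp only [toppleAt_fst, toppleAt_snd, Function.update_of_ne hxy,
      Function.update_of_ne (Ne.symm hxy)]
    exact applyInstr_comm tgt V hxy _ _ hx hy
  · simp only [toppleAt_snd, Function.update_of_ne hxy, Function.update_of_ne (Ne.symm hxy)]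
    exact Function.update_comm hxy _ _ _

lemma count_le_toppleAt_of_ne {x z : X} (hz : z ≠ x) (s : ARWState X) :
    (s.1 z).count ≤ ((toppleAt tgt V I x s).1 z).count := by
  rw [toppleAt_fst]
  rcases applyInstr_apply_of_ne tgt V hz (I x (s.2 x)) s.1 with h | h <;>
    simp [h, SiteState.count_addActive]

lemma numActive_le_toppleAt_of_ne {x z : X} (hz : z ≠ x) (s : ARWState X) :
    (s.1 z).numActive ≤ ((toppleAt tgt V I x s).1 z).numActive := by
  rw [toppleAt_fst]
  rcases applyInstr_apply_of_ne tgt V hz (I x (s.2 x)) s.1 with h | h <;> rw [h]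
  exact SiteState.numActive_le_addActive _

inductive ToppleSeq (elig : X → SiteState → Prop) : ARWState X → List X → ARWState X → Prop
  | nil (s : ARWState X) : ToppleSeq elig s [] s
  | cons {s t : ARWState X} {β : List X} {x : X} (hxV : x ∈ V) (hx : elig x (s.1 x))
      (h : ToppleSeq elig (toppleAt tgt V I x s) β t) : ToppleSeq elig s (x :: β) t

variable {tgt V I} {elig : X → SiteState → Prop} {s t : ARWState X}

namespace ToppleSeq

lemma append {m : ARWState X} {β₁ β₂ : List X} (h₁ : ToppleSeq tgt V I elig s β₁ m)
    (h₂ : ToppleSeq tgt V I elig m β₂ t) : ToppleSeq tgt V I elig s (β₁ ++ β₂) t := by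
  induction h₁ with
  | nil => exact h₂
  | cons hxV hx _ ih => exact cons hxV hx (ih h₂)

lemma of_append {β₁ β₂ : List X} (h : ToppleSeq tgt V I elig s (β₁ ++ β₂) t) :
    ∃ m, ToppleSeq tgt V I elig s β₁ m ∧ ToppleSeq tgt V I elig m β₂ t := by
  induction β₁ generalizing s with
  | nil => exact ⟨s, nil s, h⟩
  | cons x β₁ ih =>
    obtain _ | ⟨hxV, hx, h⟩ := h
    obtain ⟨m, hm₁, hm₂⟩ := ih h
    exact ⟨m, cons hxV hx hm₁, hm₂⟩

lemma odom_apply {β : List X} (h : ToppleSeq tgt V I elig s β t) (z : X) :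
    t.2 z = s.2 z + β.count z := by
  induction h with
  | nil => simp
  | @cons s t β x _ _ _ ih =>
    rw [ih, toppleAt_snd, List.count_cons]
    by_cases hzx : z = x
    · simp [hzx]
      omega
    · simp [hzx, Ne.symm hzx]

lemma numActive_le_of_notMem {β : List X} (h : ToppleSeq tgt V I elig s β t) {z : X}
    (hz : z ∉ β) : (s.1 z).numActive ≤ (t.1 z).numActive := by
  induction h with
  | nil => exact le_rfl
  | @cons s t β x _ _ _ ih =>
    rw [List.mem_cons, not_or] at hz
    exact (numActive_le_toppleAt_of_ne tgt V I hz.1 s).trans (ih hz.2)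

lemma toppleAt_of_notMem {β : List X} (h : ToppleSeq tgt V I accElig s β t) {x : X}
    (hxβ : x ∉ β) (hx : 1 ≤ (s.1 x).count) :
    ToppleSeq tgt V I accElig (toppleAt tgt V I x s) β (toppleAt tgt V I x t) := by
  induction h with
  | nil => exact nil _
  | @cons s t β y hyV hy _ ih =>
    rw [List.mem_cons, not_or] at hxβ
    have hy' : accElig y ((toppleAt tgt V I x s).1 y) :=
      le_trans hy (count_le_toppleAt_of_ne tgt V I (Ne.symm hxβ.1) s)
    have hx' : 1 ≤ ((toppleAt tgt V I y s).1 x).count :=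
      le_trans hx (count_le_toppleAt_of_ne tgt V I hxβ.1 s)
    exact cons hyV hy' (toppleAt_comm tgt V I hxβ.1 hx hy ▸ ih hxβ.2 hx')

lemma toppleAt_of_mem {β₁ β₂ : List X} {x : X}
    (h : ToppleSeq tgt V I accElig s (β₁ ++ x :: β₂) t) (hxβ : x ∉ β₁)
    (hx : 1 ≤ (s.1 x).count) :
    ToppleSeq tgt V I accElig (toppleAt tgt V I x s) (β₁ ++ β₂) t := by
  obtain ⟨m, h₁, _ | ⟨_, _, h₂⟩⟩ := h.of_append
  exact (h₁.toppleAt_of_notMem hxβ hx).append h₂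

theorem count_le_of_isStable {α β : List X} {u : ARWState X}
    (hα : ToppleSeq tgt V I unstableElig s α u) (hβ : ToppleSeq tgt V I accElig s β t)
    (ht : IsStable V t.1) (z : X) : α.count z ≤ β.count z := by
  induction hα generalizing β with
  | nil => simp
  | @cons s u α a haV ha _ ih =>
    have haβ : a ∈ β := by
      by_contra haβ
      have := (hβ.numActive_le_of_notMem haβ).trans_eq (ht a haV)
      exact Nat.not_succ_le_zero 0 (ha.trans this)
    obtain ⟨β₁, β₂, rfl, haβ₁⟩ := List.eq_append_cons_of_mem haβ
    have hcount := ih (hβ.toppleAt_of_mem haβ₁ (ha.trans (SiteState.numActive_le_count _)))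
    rw [List.perm_middle.count_eq, List.count_cons, List.count_cons]
    omega

end ToppleSeq

lemma Reach.exists_toppleSeq (h : Reach tgt V I elig s t) :
    ∃ β, ToppleSeq tgt V I elig s β t := by
  induction h with
  | refl => exact ⟨[], .nil s⟩
  | tail _ hstep ih =>
    obtain ⟨β, hβ⟩ := ih
    obtain ⟨x, hxV, hx, rfl⟩ := hstep
    exact ⟨β ++ [x], hβ.append (.cons hxV hx (.nil _))⟩

theorem odom_le_of_reach_of_isStable {u : ARWState X}
    (hu : Reach tgt V I unstableElig s u) (ht : Reach tgt V I accElig s t)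
    (hts : IsStable V t.1) (x : X) : u.2 x ≤ t.2 x := by
  obtain ⟨α, hα⟩ := hu.exists_toppleSeq
  obtain ⟨β, hβ⟩ := ht.exists_toppleSeq
  rw [hα.odom_apply, hβ.odom_apply]
  exact Nat.add_le_add_left (hα.count_le_of_isStable hβ hts x) _

theorem least_action_principle_general (d : ℕ) (V : Finset (SiteZ d))
    (I : Stacks (SiteZ d) (Dir d)) (s t u : ARWState (SiteZ d))
    (ht : Reach (tgtZ d) V I accElig s t) (hts : IsStable V t.1)
    (hu : Reach (tgtZ d) V I unstableElig s u) :
    ∀ x ∈ V, u.2 x ≤ t.2 x :=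
  fun x _ => odom_le_of_reach_of_isStable hu ht hts x

/-- **Least action principle.**  Fix a finite `V ⊂ ℤ^d`, instruction stacks `I`, and
a starting state `s = (σ, m)`.  If the state `t` is produced from `s` by a sequence of
acceptable topplings ending in a stable configuration and `u` is produced from `s` by
toppling only unstable sites, ending in a stable configuration (so that `u.2` is the
stabilizing odometer `Odom_V (σ, m)`), then `t.2 x ≥ u.2 x` for every `x ∈ V`. -/
theorem least_action_principle (d : ℕ) (V : Finset (SiteZ d))
    (I : Stacks (SiteZ d) (Dir d)) (s t u : ARWState (SiteZ d))
    (ht : Reach (tgtZ d) V I accElig s t) (hts : IsStable V t.1)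
    (hu : Reach (tgtZ d) V I unstableElig s u) (hus : IsStable V u.1) :
    ∀ x ∈ V, u.2 x ≤ t.2 x :=
  least_action_principle_general d V I s t u ht hts hu

end ARW
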